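/- Let β ∈ ℝ^p with β ≠ 0 and let t = |{i ∈ {1,…,p} : |βᵢ| = ‖β‖_∞}| ≥ 1. Then the relative diameter of β with respect to the ℓ∞ norm satisfies φ(β;‖·‖_∞)² = 1 + 1/max{t − 1, 1/3}. -/

import Mathlib

open Metric Set

noncomputable section

/-- Euclidean space `ℝ^p`. -/
abbrev E (p : ℕ) := EuclideanSpace ℝ (Fin p)

/-- The dual norm of a norm `N` on `ℝ^p`: `‖θ‖⋆ = sup {⟨θ, β⟩ : N β ≤ 1}`. -/
def dualOf {p : ℕ} (N : E p → ℝ) (θ : E p) : ℝ :=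
  sSup ((fun β => (inner ℝ θ β : ℝ)) '' {β | N β ≤ 1})

/-- The dual norm unit ball `B⋆ = {z : ‖z‖⋆ ≤ 1}`. -/
def dualBall {p : ℕ} (N : E p → ℝ) : Set (E p) :=
  {z | dualOf N z ≤ 1}

/-- The subdifferential of `N` at `β`. -/
def subdiff {p : ℕ} (N : E p → ℝ) (β : E p) : Set (E p) :=
  {g | ∀ y : E p, N y ≥ N β + (inner ℝ g (y - β) : ℝ)}

/-- The relative diameter `φ(β; N)`: the Hausdorff distance (in the Euclidean metric)
between the dual norm ball and the subdifferential of `N` at `β`. -/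
def relDiam {p : ℕ} (N : E p → ℝ) (β : E p) : ℝ :=
  Metric.hausdorffDist (dualBall N) (subdiff N β)

/-- The ℓ∞ norm on `ℝ^p`. -/
def linf {p : ℕ} (β : E p) : ℝ := ⨆ i, |β i|

/-! The dual ball of `ℓ∞` is the `ℓ¹` ball `B₁`, and for `β ≠ 0` the subdifferential is the
face `F` of `B₁` spanned by the vertices `sign (βᵢ) • eᵢ` for the `t` indices `i` with
`|βᵢ| = ‖β‖∞`. As `F ⊆ B₁`, the Hausdorff distance is the largest distance from a point of `B₁`
to `F`, and since the distance to a convex set is a convex function it is attained at `0` or at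
a vertex `± eₖ` of `B₁`. For `t ≥ 2` every such point lies within `√(1 + 1/(t-1))` of the
barycentre of the face spanned by the maximal indices other than `k`; for `t = 1` every point
of `B₁` lies within `2` of `F`. Conversely, `-sign (βⱼ) • eⱼ` with `|βⱼ| = ‖β‖∞` is at least that
far from `F`: by Cauchy–Schwarz, `g ∈ F` cannot put its mass `1 - |gⱼ|` on the other `t - 1`
maximal coordinates with `ℓ²` norm below `(1 - |gⱼ|)/√(t-1)`. -/

open scoped RealInnerProductSpace

theorem hausdorffDist_eq_of_subset {X : Type*} [PseudoMetricSpace X] {s t : Set X} {r : ℝ}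
    {x : X} (hts : t ⊆ s) (hs : Bornology.IsBounded s) (ht : t.Nonempty)
    (hr : ∀ y ∈ s, infDist y t ≤ r) (hx : x ∈ s) (hxr : r ≤ infDist x t) :
    hausdorffDist s t = r := by
  have hr₀ : 0 ≤ r := infDist_nonneg.trans (hr x hx)
  refine le_antisymm (hausdorffDist_le_of_infDist hr₀ hr fun y hy => ?_) ?_
  · rw [infDist_zero_of_mem (hts hy)]
    exact hr₀
  · exact hxr.trans <| infDist_le_hausdorffDist_of_mem hx <|
      hausdorffEDist_ne_top_of_nonempty_of_bounded ⟨x, hx⟩ ht hs (hs.subset hts)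

theorem convexOn_infDist {V : Type*} [SeminormedAddCommGroup V] [NormedSpace ℝ V] {F : Set V}
    (hF : Convex ℝ F) : ConvexOn ℝ univ (infDist · F) := by
  refine ⟨convex_univ, fun x _ y _ a b ha hb hab => ?_⟩
  rcases F.eq_empty_or_nonempty with rfl | hne
  · simp
  refine le_of_forall_pos_le_add fun ε hε => ?_
  obtain ⟨u, hu, hxu⟩ := (infDist_lt_iff hne).1 (lt_add_of_pos_right (infDist x F) hε)
  obtain ⟨v, hv, hyv⟩ := (infDist_lt_iff hne).1 (lt_add_of_pos_right (infDist y F) hε)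
  calc infDist (a • x + b • y) F ≤ dist (a • x + b • y) (a • u + b • v) :=
        infDist_le_dist_of_mem (hF hu hv ha hb hab)
    _ ≤ a * dist x u + b * dist y v := by
        refine (dist_add_add_le _ _ _ _).trans ?_
        rw [dist_smul₀, dist_smul₀, Real.norm_of_nonneg ha, Real.norm_of_nonneg hb]
    _ ≤ a * (infDist x F + ε) + b * (infDist y F + ε) := by gcongr
    _ = a • infDist x F + b • infDist y F + ε := by
        simp only [smul_eq_mul]
        linear_combination ε * hab

theorem convex_subdiff {p : ℕ} (N : E p → ℝ) (β : E p) : Convex ℝ (subdiff N β) := by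
  intro g₁ h₁ g₂ h₂ a b ha hb hab y
  have key := add_le_add (mul_le_mul_of_nonneg_left (h₁ y) ha) (mul_le_mul_of_nonneg_left (h₂ y) hb)
  rw [inner_add_left, real_inner_smul_left, real_inner_smul_left]
  linear_combination key + (N y - N β) * hab

theorem mem_subdiff_iff {p : ℕ} (N : Seminorm ℝ (E p)) {β g : E p} :
    g ∈ subdiff N β ↔ (∀ y, ⟪g, y⟫ ≤ N y) ∧ ⟪g, β⟫ = N β := by
  refine ⟨fun hg => ?_, fun ⟨hle, heq⟩ y => ?_⟩
  · have h₀ := hg 0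
    have h₂ := hg (β + β)
    rw [map_zero, zero_sub, inner_neg_right] at h₀
    rw [add_sub_cancel_right, ← two_smul ℝ β, map_smul_eq_mul, Real.norm_two] at h₂
    refine ⟨fun y => ?_, by linarith⟩
    have h := hg (y + β)
    rw [add_sub_cancel_right] at h
    linarith [map_add_le_add N y β]
  · rw [inner_sub_right, heq]
    linarith [hle y]

theorem abs_sign_le_one (x : ℝ) : |(SignType.sign x : ℝ)| ≤ 1 := by
  rcases lt_trichotomy x 0 with h | h | h <;> simp [h]

theorem abs_sign_of_ne_zero {x : ℝ} (hx : x ≠ 0) : |(SignType.sign x : ℝ)| = 1 := by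
  rcases hx.lt_or_gt with h | h <;> simp [h]

theorem one_add_one_div_max_le {t : ℕ} (ht : 1 ≤ t) {a R : ℝ} (ha : 0 ≤ a) (hR : 0 ≤ R)
    (h : (1 - a) ^ 2 ≤ (t - 1) * R) :
    1 + 1 / max ((t : ℝ) - 1) (1 / 3) ≤ 1 + 2 * a + a ^ 2 + R := by
  rcases ht.eq_or_lt with rfl | ht
  · have ha1 : a = 1 := by
      have : (1 - a) ^ 2 ≤ 0 := by simpa using h
      nlinarith
    norm_num [ha1]
    linarith
  · have ht' : (1 : ℝ) ≤ t - 1 := by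
      rw [le_sub_iff_add_le, one_add_one_eq_two]
      exact_mod_cast ht
    rw [max_eq_left (by linarith), add_assoc, add_assoc, add_le_add_iff_left,
      div_le_iff₀ (by linarith)]
    nlinarith

section EuclideanCoordinates

variable {p : ℕ}

theorem real_inner_eq_sum (x y : E p) : ⟪x, y⟫ = ∑ i, x i * y i := by
  simp [PiLp.inner_apply, mul_comm]

theorem sum_smul_single (z : E p) : ∑ i, z i • EuclideanSpace.single i (1 : ℝ) = z := by
  simpa using (EuclideanSpace.basisFun (Fin p) ℝ).sum_repr z

theorem norm_le_sum_abs (z : E p) : ‖z‖ ≤ ∑ i, |z i| := by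
  conv_lhs => rw [← sum_smul_single z]
  refine (norm_sum_le _ _).trans_eq ?_
  simp [norm_smul]

theorem sum_abs_smul_single (k : Fin p) (c : ℝ) :
    ∑ i, |(c • EuclideanSpace.single k (1 : ℝ)) i| = |c| := by
  simp [apply_ite]

theorem ConvexOn.le_of_sum_abs_le_one {f : E p → ℝ} {r : ℝ} (hf : ConvexOn ℝ univ f)
    (h₀ : f 0 ≤ r) (hvert : ∀ k (c : ℝ), |c| ≤ 1 → f (c • EuclideanSpace.single k 1) ≤ r)
    {z : E p} (hz : ∑ i, |z i| ≤ 1) : f z ≤ r := by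
  let w : Option (Fin p) → ℝ := fun o => o.elim (1 - ∑ i, |z i|) fun k => |z k|
  let x : Option (Fin p) → E p :=
    fun o => o.elim 0 fun k => (SignType.sign (z k) : ℝ) • EuclideanSpace.single k 1
  have hw₀ : ∀ o ∈ Finset.univ, 0 ≤ w o := by
    rintro (_ | k) _
    · exact sub_nonneg.2 hz
    · exact abs_nonneg _
  have hw₁ : ∑ o, w o = 1 := by simp [w, Fintype.sum_option]
  have hx : ∀ o, f (x o) ≤ r := by
    rintro (_ | k)
    · exact h₀
    · exact hvert k _ (abs_sign_le_one (z k))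
  have hwx : ∑ o, w o • x o = z := by
    simp only [w, x, Fintype.sum_option, Option.elim, smul_zero, zero_add, smul_smul,
      abs_mul_sign, sum_smul_single]
  calc f z = f (∑ o, w o • x o) := by rw [hwx]
    _ ≤ ∑ o, w o • f (x o) := hf.map_sum_le hw₀ hw₁ fun _ _ => mem_univ _
    _ ≤ ∑ o, w o • r := Finset.sum_le_sum fun o ho => smul_le_smul_of_nonneg_left (hx o) (hw₀ o ho)
    _ = r := by rw [← Finset.sum_smul, hw₁, one_smul]

end EuclideanCoordinates

section LInfinity

variable {p : ℕ}

theorem linf_eq_norm_ofLp (β : E p) : linf β = ‖WithLp.ofLp β‖ :=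
  le_antisymm (Real.iSup_le (fun i => norm_le_pi_norm (WithLp.ofLp β) i) (norm_nonneg _))
    ((pi_norm_le_iff_of_nonneg (Real.iSup_nonneg fun i => abs_nonneg (β i))).2 fun i =>
      (Real.norm_eq_abs _).trans_le (le_ciSup (finite_range fun i => |β i|).bddAbove i))

def linfSeminorm (p : ℕ) : Seminorm ℝ (E p) :=
  (normSeminorm ℝ (Fin p → ℝ)).comp (WithLp.linearEquiv 2 ℝ (Fin p → ℝ)).toLinearMap

theorem coe_linfSeminorm : ⇑(linfSeminorm p) = linf :=
  funext fun β => (linf_eq_norm_ofLp β).symm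

theorem abs_le_linf (β : E p) (i : Fin p) : |β i| ≤ linf β :=
  linf_eq_norm_ofLp β ▸ norm_le_pi_norm (WithLp.ofLp β) i

theorem linf_nonneg (β : E p) : 0 ≤ linf β :=
  linf_eq_norm_ofLp β ▸ norm_nonneg _

theorem linf_pos {β : E p} (hβ : β ≠ 0) : 0 < linf β := by
  rw [linf_eq_norm_ofLp]
  exact norm_pos_iff.2 fun h => hβ (WithLp.ofLp_injective 2 h)

theorem linf_le_of_forall_abs_le {β : E p} {r : ℝ} (hr : 0 ≤ r) (h : ∀ i, |β i| ≤ r) :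
    linf β ≤ r :=
  linf_eq_norm_ofLp β ▸ (pi_norm_le_iff_of_nonneg hr).2 h

theorem inner_le_sum_abs_mul_linf (g y : E p) : ⟪g, y⟫ ≤ (∑ i, |g i|) * linf y := by
  rw [real_inner_eq_sum, Finset.sum_mul]
  refine Finset.sum_le_sum fun i _ => ?_
  calc g i * y i ≤ |g i| * |y i| := (le_abs_self _).trans_eq (abs_mul _ _)
    _ ≤ |g i| * linf y := by gcongr; exact abs_le_linf y i

def signVec (g : E p) : E p := WithLp.toLp 2 fun i => (SignType.sign (g i) : ℝ)

theorem linf_signVec_le_one (g : E p) : linf (signVec g) ≤ 1 :=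
  linf_le_of_forall_abs_le zero_le_one fun i => abs_sign_le_one (g i)

theorem inner_signVec (g : E p) : ⟪g, signVec g⟫ = ∑ i, |g i| := by
  simp [real_inner_eq_sum, signVec]

theorem forall_inner_le_linf_iff (g : E p) : (∀ y, ⟪g, y⟫ ≤ linf y) ↔ ∑ i, |g i| ≤ 1 :=
  ⟨fun h => (inner_signVec g).symm.trans_le ((h _).trans (linf_signVec_le_one g)),
    fun h y => (inner_le_sum_abs_mul_linf g y).trans
      (mul_le_of_le_one_left (linf_nonneg y) h)⟩

theorem dualOf_linf (z : E p) : dualOf linf z = ∑ i, |z i| := by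
  refine IsGreatest.csSup_eq ⟨⟨signVec z, linf_signVec_le_one z, inner_signVec z⟩, ?_⟩
  rintro _ ⟨y, hy, rfl⟩
  exact (inner_le_sum_abs_mul_linf z y).trans (mul_le_of_le_one_right
    (Finset.sum_nonneg fun i _ => abs_nonneg _) hy)

theorem mem_dualBall_linf {z : E p} : z ∈ dualBall (linf (p := p)) ↔ ∑ i, |z i| ≤ 1 := by
  show dualOf linf z ≤ 1 ↔ _
  rw [dualOf_linf]

theorem norm_le_one_of_mem_dualBall_linf {z : E p} (hz : z ∈ dualBall (linf (p := p))) :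
    ‖z‖ ≤ 1 :=
  (norm_le_sum_abs z).trans (mem_dualBall_linf.1 hz)

theorem isBounded_dualBall_linf : Bornology.IsBounded (dualBall (linf (p := p))) :=
  isBounded_closedBall.subset fun _ hz => mem_closedBall_zero_iff.2 <|
    norm_le_one_of_mem_dualBall_linf hz

theorem mem_subdiff_linf {β g : E p} :
    g ∈ subdiff linf β ↔ ∑ i, |g i| ≤ 1 ∧ ⟪g, β⟫ = linf β := by
  rw [← coe_linfSeminorm, mem_subdiff_iff, coe_linfSeminorm, forall_inner_le_linf_iff]

theorem subdiff_linf_subset_dualBall (β : E p) : subdiff linf β ⊆ dualBall (linf (p := p)) :=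
  fun _ hg => mem_dualBall_linf.2 (mem_subdiff_linf.1 hg).1

end LInfinity

section Subdifferential

variable {p : ℕ} {β g : E p}

def argmaxAbs (β : E p) : Finset (Fin p) := Finset.univ.filter fun i => |β i| = linf β

theorem mem_argmaxAbs {i : Fin p} : i ∈ argmaxAbs β ↔ |β i| = linf β := by
  simp [argmaxAbs]

theorem ne_zero_of_mem_argmaxAbs (hβ : β ≠ 0) {i : Fin p} (hi : i ∈ argmaxAbs β) : β i ≠ 0 :=
  fun h => (linf_pos hβ).ne' <| by rw [← mem_argmaxAbs.1 hi, h, abs_zero]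

theorem mul_eq_abs_mul_linf_of_mem_subdiff (hg : g ∈ subdiff linf β) (i : Fin p) :
    g i * β i = |g i| * linf β := by
  obtain ⟨hg₁, hgβ⟩ := mem_subdiff_linf.1 hg
  have hle : ∀ i, g i * β i ≤ |g i| * linf β := fun i =>
    calc g i * β i ≤ |g i| * |β i| := (le_abs_self _).trans_eq (abs_mul _ _)
      _ ≤ |g i| * linf β := by gcongr; exact abs_le_linf β i
  have hsum : ∑ i, (|g i| * linf β - g i * β i) = 0 := by
    refine le_antisymm ?_ (Finset.sum_nonneg fun i _ => sub_nonneg.2 (hle i))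
    rw [Finset.sum_sub_distrib, ← Finset.sum_mul, ← real_inner_eq_sum, hgβ]
    nlinarith [linf_nonneg β]
  linarith [(Finset.sum_eq_zero_iff_of_nonneg fun i _ => sub_nonneg.2 (hle i)).1 hsum i
    (Finset.mem_univ i)]

theorem sum_abs_eq_one_of_mem_subdiff (hβ : β ≠ 0) (hg : g ∈ subdiff linf β) :
    ∑ i, |g i| = 1 := by
  have h := (mem_subdiff_linf.1 hg).2
  simp only [real_inner_eq_sum, mul_eq_abs_mul_linf_of_mem_subdiff hg, ← Finset.sum_mul] at h
  exact (mul_eq_right₀ (linf_pos hβ).ne').1 h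

theorem eq_zero_of_mem_subdiff_of_abs_lt (hg : g ∈ subdiff linf β) {i : Fin p}
    (hi : |β i| < linf β) : g i = 0 := by
  have h := mul_eq_abs_mul_linf_of_mem_subdiff hg i
  have : |g i| * linf β ≤ |g i| * |β i| := h ▸ (le_abs_self _).trans_eq (abs_mul _ _)
  exact abs_eq_zero.1 (le_antisymm (by nlinarith [abs_nonneg (g i)]) (abs_nonneg _))

end Subdifferential

section Face

variable {p : ℕ}

/-- The barycentre of the face of the `ℓ¹` unit ball spanned by the vertices
`sign (β i) • eᵢ`, `i ∈ S`. -/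
def faceCenter (β : E p) (S : Finset (Fin p)) : E p :=
  WithLp.toLp 2 fun i => if i ∈ S then (SignType.sign (β i) : ℝ) / S.card else 0

variable {β : E p} {S : Finset (Fin p)}

theorem faceCenter_apply_of_mem {i : Fin p} (hi : i ∈ S) :
    faceCenter β S i = (SignType.sign (β i) : ℝ) / S.card := if_pos hi

theorem faceCenter_apply_of_notMem {i : Fin p} (hi : i ∉ S) : faceCenter β S i = 0 :=
  if_neg hi

theorem sum_abs_faceCenter (hS : S.Nonempty) (hβS : ∀ i ∈ S, β i ≠ 0) :
    ∑ i, |faceCenter β S i| = 1 := by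
  rw [← Finset.sum_subset S.subset_univ fun i _ hi => by
      rw [faceCenter_apply_of_notMem hi, abs_zero],
    Finset.sum_congr rfl fun i hi => by
      rw [faceCenter_apply_of_mem hi, abs_div, abs_sign_of_ne_zero (hβS i hi), Nat.abs_cast],
    Finset.sum_const, nsmul_eq_mul]
  field_simp [hS.card_pos.ne']

theorem inner_faceCenter (hS : S.Nonempty) (hST : S ⊆ argmaxAbs β) :
    ⟪faceCenter β S, β⟫ = linf β := by
  rw [real_inner_eq_sum, ← Finset.sum_subset S.subset_univ fun i _ hi => by
      rw [faceCenter_apply_of_notMem hi, zero_mul],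
    Finset.sum_congr rfl fun i hi => by
      rw [faceCenter_apply_of_mem hi, div_mul_eq_mul_div, sign_mul_self, mem_argmaxAbs.1 (hST hi)],
    Finset.sum_const, nsmul_eq_mul]
  field_simp [hS.card_pos.ne']

theorem faceCenter_mem_subdiff (hβ : β ≠ 0) (hS : S.Nonempty) (hST : S ⊆ argmaxAbs β) :
    faceCenter β S ∈ subdiff linf β :=
  mem_subdiff_linf.2 ⟨(sum_abs_faceCenter hS fun _ hi => ne_zero_of_mem_argmaxAbs hβ (hST hi)).le,
    inner_faceCenter hS hST⟩

theorem norm_smul_single_sub_faceCenter_sq (hβS : ∀ i ∈ S, β i ≠ 0) {k : Fin p} (hk : k ∉ S)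
    (c : ℝ) :
    ‖c • EuclideanSpace.single k 1 - faceCenter β S‖ ^ 2 = c ^ 2 + 1 / S.card := by
  have hu : ‖faceCenter β S‖ ^ 2 = 1 / S.card := by
    rw [EuclideanSpace.real_norm_sq_eq, ← Finset.sum_subset S.subset_univ fun i _ hi => by
        rw [faceCenter_apply_of_notMem hi, zero_pow two_ne_zero],
      Finset.sum_congr rfl fun i hi => by
        rw [faceCenter_apply_of_mem hi, div_pow, ← sq_abs, abs_sign_of_ne_zero (hβS i hi)],
      Finset.sum_const, nsmul_eq_mul]
    rcases S.eq_empty_or_nonempty with rfl | hS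
    · simp
    · field_simp [hS.card_pos.ne']
  rw [norm_sub_sq_real, hu, real_inner_smul_left, EuclideanSpace.inner_single_left,
    faceCenter_apply_of_notMem hk]
  simp [norm_smul]

end Face

section Bounds

variable {p : ℕ} {β : E p}

local notation "C(" β ")" => 1 + 1 / max ((Finset.card (argmaxAbs β) : ℝ) - 1) (1 / 3)

theorem norm_neg_vertex_sub_sq (hβ : β ≠ 0) {g : E p} (hg : g ∈ subdiff linf β) {j : Fin p}
    (hj : j ∈ argmaxAbs β) :
    ‖(-(β j / linf β)) • EuclideanSpace.single j 1 - g‖ ^ 2 = 1 + 2 * |g j| + ‖g‖ ^ 2 := by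
  have hM := (linf_pos hβ).ne'
  have h₁ : |β j / linf β| = 1 := by
    rw [abs_div, mem_argmaxAbs.1 hj, abs_of_pos (linf_pos hβ), div_self hM]
  have h₂ : β j / linf β * g j = |g j| := by
    rw [div_mul_eq_mul_div, mul_comm, mul_eq_abs_mul_linf_of_mem_subdiff hg, mul_div_assoc,
      div_self hM, mul_one]
  rw [norm_sub_sq_real, real_inner_smul_left, EuclideanSpace.inner_single_left, norm_smul,
    Real.norm_eq_abs, abs_neg, h₁, PiLp.norm_single, norm_one, map_one, one_mul, one_mul, neg_mul,
    h₂]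
  ring

theorem sq_one_sub_abs_le (hβ : β ≠ 0) {g : E p} (hg : g ∈ subdiff linf β) {j : Fin p}
    (hj : j ∈ argmaxAbs β) :
    (1 - |g j|) ^ 2 ≤ (((argmaxAbs β).card : ℝ) - 1) * (‖g‖ ^ 2 - |g j| ^ 2) := by
  set T := argmaxAbs β
  have hsum : ∑ i ∈ T.erase j, |g i| = 1 - |g j| := by
    rw [Finset.sum_erase_eq_sub hj, Finset.sum_subset T.subset_univ fun i _ hi => ?_,
      sum_abs_eq_one_of_mem_subdiff hβ hg]
    rw [eq_zero_of_mem_subdiff_of_abs_lt hg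
      ((abs_le_linf β i).lt_of_ne (mt mem_argmaxAbs.2 hi)), abs_zero]
  have hsq : ∑ i ∈ T.erase j, |g i| ^ 2 ≤ ‖g‖ ^ 2 - |g j| ^ 2 := by
    rw [EuclideanSpace.real_norm_sq_eq, sq_abs, ← Finset.sum_erase_eq_sub (Finset.mem_univ j)]
    simp only [sq_abs]
    exact Finset.sum_le_sum_of_subset_of_nonneg (Finset.erase_subset_erase j T.subset_univ)
      fun i _ _ => sq_nonneg _
  have hcard : ((T.erase j).card : ℝ) = T.card - 1 := by
    rw [Finset.card_erase_of_mem hj, Nat.cast_pred (Finset.card_pos.2 ⟨j, hj⟩)]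
  have hT : (0 : ℝ) ≤ T.card - 1 := hcard ▸ Nat.cast_nonneg _
  calc (1 - |g j|) ^ 2 ≤ (T.card - 1) * ∑ i ∈ T.erase j, |g i| ^ 2 := by
        rw [← hsum, ← hcard]
        exact sq_sum_le_card_mul_sum_sq
    _ ≤ (T.card - 1) * (‖g‖ ^ 2 - |g j| ^ 2) := by gcongr

theorem le_infDist_subdiff_linf (hβ : β ≠ 0) {j : Fin p} (hj : j ∈ argmaxAbs β) :
    √C(β) ≤ infDist ((-(β j / linf β)) • EuclideanSpace.single j 1) (subdiff linf β) := by
  have hT : (argmaxAbs β).Nonempty := ⟨j, hj⟩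
  refine (le_infDist ⟨_, faceCenter_mem_subdiff hβ hT subset_rfl⟩).2 fun g hg => ?_
  have hR : 0 ≤ ‖g‖ ^ 2 - |g j| ^ 2 :=
    sub_nonneg.2 (pow_le_pow_left₀ (abs_nonneg _) (PiLp.norm_apply_le g j) 2)
  rw [dist_eq_norm, Real.sqrt_le_left (norm_nonneg _), norm_neg_vertex_sub_sq hβ hg hj]
  linarith [one_add_one_div_max_le (Finset.card_pos.2 hT) (abs_nonneg (g j)) hR
    (sq_one_sub_abs_le hβ hg hj)]

theorem infDist_smul_single_subdiff_linf_le (hβ : β ≠ 0) (hT : (argmaxAbs β).Nonempty)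
    (k : Fin p) {c : ℝ} (hc : |c| ≤ 1) :
    infDist (c • EuclideanSpace.single k 1) (subdiff linf β) ≤ √C(β) := by
  set T := argmaxAbs β
  rcases (Finset.one_le_card.2 hT).eq_or_lt with h1 | h2
  · have hu := faceCenter_mem_subdiff hβ hT subset_rfl
    calc infDist (c • EuclideanSpace.single k 1) (subdiff linf β)
        ≤ ‖c • EuclideanSpace.single k (1 : ℝ)‖ + ‖faceCenter β T‖ :=
          (infDist_le_dist_of_mem hu).trans (dist_le_norm_add_norm _ _)
      _ ≤ 1 + 1 := add_le_add (by simpa [norm_smul] using hc)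
          (norm_le_one_of_mem_dualBall_linf (subdiff_linf_subset_dualBall β hu))
      _ = √C(β) := by
          rw [← h1, Nat.cast_one, sub_self, show (1 : ℝ) + 1 / max 0 (1 / 3) = 2 ^ 2 by norm_num,
            Real.sqrt_sq zero_le_two, one_add_one_eq_two]
  · have hS : (T.erase k).Nonempty := by
      rw [← Finset.card_pos]
      have := Finset.pred_card_le_card_erase (s := T) (a := k)
      omega
    have hcard : (T.card : ℝ) - 1 ≤ (T.erase k).card := by
      rw [← Nat.cast_pred hT.card_pos]
      exact_mod_cast Finset.pred_card_le_card_erase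
    have ht : (1 : ℝ) ≤ T.card - 1 := by
      rw [le_sub_iff_add_le, one_add_one_eq_two]
      exact_mod_cast h2
    refine (infDist_le_dist_of_mem (faceCenter_mem_subdiff hβ hS (T.erase_subset k))).trans ?_
    rw [dist_eq_norm, Real.le_sqrt (norm_nonneg _) (by positivity),
      norm_smul_single_sub_faceCenter_sq
        (fun _ hi => ne_zero_of_mem_argmaxAbs hβ (Finset.mem_of_mem_erase hi)) (T.notMem_erase k) c,
      max_eq_left (by linarith)]
    gcongr
    exact (sq_le_one_iff_abs_le_one c).2 hc

theorem infDist_subdiff_linf_le (hβ : β ≠ 0) (hT : (argmaxAbs β).Nonempty) {z : E p}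
    (hz : z ∈ dualBall (linf (p := p))) : infDist z (subdiff linf β) ≤ √C(β) := by
  obtain ⟨j, -⟩ := id hT
  exact (convexOn_infDist (convex_subdiff _ _)).le_of_sum_abs_le_one
    (by simpa using infDist_smul_single_subdiff_linf_le hβ hT j (c := 0) (by simp))
    (fun k c hc => infDist_smul_single_subdiff_linf_le hβ hT k hc) (mem_dualBall_linf.1 hz)

end Bounds

/-- the relative diameter of `β ≠ 0` with respect to the ℓ∞ norm
satisfies `φ(β;‖·‖_∞)² = 1 + 1/max{t − 1, 1/3}`, where `t` is the number of
coordinates attaining the maximal absolute value. -/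
theorem relDiam_linf (p : ℕ) (β : E p) (hβ : β ≠ 0)
    (t : ℕ) (ht : t = (Finset.univ.filter fun i => |β i| = linf β).card)
    (ht1 : 1 ≤ t) :
    relDiam (linf (p := p)) β ^ 2 = 1 + 1 / max ((t : ℝ) - 1) (1 / 3) := by
  subst ht
  obtain ⟨j, hj⟩ := Finset.card_pos.1 ht1
  have hT : (argmaxAbs β).Nonempty := ⟨j, hj⟩
  have hvertex : (-(β j / linf β)) • EuclideanSpace.single j 1 ∈ dualBall (linf (p := p)) := by
    rw [mem_dualBall_linf, sum_abs_smul_single, abs_neg, abs_div, mem_argmaxAbs.1 hj,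
      abs_of_pos (linf_pos hβ), div_self (linf_pos hβ).ne']
  rw [relDiam, hausdorffDist_eq_of_subset (subdiff_linf_subset_dualBall β) isBounded_dualBall_linf
    ⟨_, faceCenter_mem_subdiff hβ hT subset_rfl⟩ (fun z hz => infDist_subdiff_linf_le hβ hT hz)
    hvertex (le_infDist_subdiff_linf hβ hj)]
  exact Real.sq_sqrt (by positivity)

end
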